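/- arXiv:2312.07521 — 3 statements merged into one kernel-verified Lean document; each statement's English description precedes it below -/
import Mathlib

section
/- Let 0 < α ≤ 1, let G be a graph with m ≥ 1 edges, and let H be a subgraph of G with e(H) ≥ α·e(G). Then q*(G) ≤ 1 − α·min{ĥ_H, α}. -/
open Finset
open scoped Classical

noncomputable section

variable {V : Type*} [Fintype V]

/-- Number of edges between `A` and `B` (each cross edge counted once when `A`,`B` disjoint). -/
def ecut (G : SimpleGraph V) (A B : Finset V) : ℝ :=
  ((A ×ˢ B).filter fun p => G.Adj p.1 p.2).card

/-- Number of edges inside `A`. -/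
def ein (G : SimpleGraph V) (A : Finset V) : ℝ := ecut G A A / 2

/-- Volume of a vertex set: sum of degrees. -/
def gvol (G : SimpleGraph V) (A : Finset V) : ℝ := ∑ v ∈ A, (G.degree v : ℝ)

/-- Number of edges of `G`. -/
def edgecount (G : SimpleGraph V) : ℝ := (G.edgeFinset.card : ℝ)

/-- Conductance (Cheeger constant) `h_G`. -/
def conduct (G : SimpleGraph V) : ℝ :=
  sInf { x | ∃ A : Finset V, A.Nonempty ∧ A ≠ univ ∧
    x = ecut G A Aᶜ / min (gvol G A) (gvol G Aᶜ) }

/-- Expansion-by-products `ĥ_G`. -/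
def hhat (G : SimpleGraph V) : ℝ :=
  sInf { x | ∃ A : Finset V, A.Nonempty ∧ A ≠ univ ∧
    x = ecut G A Aᶜ * gvol G univ / (gvol G A * gvol G Aᶜ) }

/-- Modularity score of a vertex partition. -/
def modScore (G : SimpleGraph V) (P : Finpartition (univ : Finset V)) : ℝ :=
  (∑ A ∈ P.parts, ein G A) / edgecount G
    - (∑ A ∈ P.parts, (gvol G A) ^ 2) / (4 * (edgecount G) ^ 2)

/-- Modularity `q*(G)`: maximum modularity score over vertex partitions. -/
def modularity (G : SimpleGraph V) : ℝ :=
  sSup { x | ∃ P : Finpartition (univ : Finset V), x = modScore G P }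

section Aux

lemma ecut_eq_sum' (G : SimpleGraph V) (A B : Finset V) :
    ecut G A B = ∑ v ∈ A, ((B.filter (G.Adj v)).card : ℝ) := by
  unfold ecut
  norm_cast
  rw [Finset.card_eq_sum_card_fiberwise (f := Prod.fst) (t := A)
    (fun p hp => (Finset.mem_filter.1 hp).1 |> fun h => (Finset.mem_product.1 h).1)]
  refine Finset.sum_congr rfl fun v hv => ?_
  rw [Finset.filter_filter]
  refine Finset.card_bij (fun p _ => p.2) ?_ ?_ ?_
  · rintro ⟨a, b⟩ hp
    simp only [Finset.mem_filter, Finset.mem_product] at hp ⊢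
    rcases hp with ⟨⟨_, hb⟩, hadj, rfl⟩
    exact ⟨hb, hadj⟩
  · rintro ⟨a, b⟩ hp ⟨c, d⟩ hq h
    simp only [Finset.mem_filter] at hp hq
    cases hp.2.2; cases hq.2.2; simp_all
  · intro b hb
    simp only [Finset.mem_filter] at hb
    exact ⟨(v, b), by simp [Finset.mem_product, hb.1, hb.2, hv], rfl⟩

lemma ecut_nonneg' (G : SimpleGraph V) (A B : Finset V) : 0 ≤ ecut G A B := by
  unfold ecut; positivity

lemma gvol_nonneg' (G : SimpleGraph V) (A : Finset V) : 0 ≤ gvol G A := by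
  unfold gvol; positivity

lemma gvol_eq_split' (G : SimpleGraph V) (A : Finset V) :
    gvol G A = ecut G A A + ecut G A Aᶜ := by
  rw [ecut_eq_sum', ecut_eq_sum', ← Finset.sum_add_distrib]
  refine Finset.sum_congr rfl fun v hv => ?_
  rw [SimpleGraph.degree]
  have h1 : G.neighborFinset v = univ.filter (G.Adj v) := by
    ext w; simp [SimpleGraph.mem_neighborFinset]
  rw [h1]
  have h2 : (univ : Finset V) = A ∪ Aᶜ := by simp
  rw [h2, Finset.filter_union]
  rw [Finset.card_union_of_disjoint
    (Finset.disjoint_filter_filter disjoint_compl_right)]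
  push_cast; ring

lemma ecut_mono' {G H : SimpleGraph V} (hle : H ≤ G) (A B : Finset V) :
    ecut H A B ≤ ecut G A B := by
  unfold ecut
  have h : ((A ×ˢ B).filter fun p => H.Adj p.1 p.2) ⊆
      ((A ×ˢ B).filter fun p => G.Adj p.1 p.2) := by
    intro p hp
    simp only [Finset.mem_filter] at hp ⊢
    exact ⟨hp.1, hle hp.2⟩
  exact_mod_cast Finset.card_le_card h

lemma gvol_mono' {G H : SimpleGraph V} (hle : H ≤ G) (A : Finset V) :
    gvol H A ≤ gvol G A := by
  refine Finset.sum_le_sum fun v _ => ?_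
  exact_mod_cast Finset.card_le_card fun w hw => by
    simp only [SimpleGraph.mem_neighborFinset] at hw ⊢; exact hle hw

lemma gvol_univ' (G : SimpleGraph V) : gvol G univ = 2 * edgecount G := by
  unfold gvol edgecount
  rw [← Nat.cast_sum]
  exact_mod_cast congrArg (Nat.cast (R := ℝ)) (G.sum_degrees_eq_twice_card_edges)

lemma hhat_nonneg' (H : SimpleGraph V) : 0 ≤ hhat H := by
  apply Real.sInf_nonneg
  rintro x ⟨A, -, -, rfl⟩
  exact div_nonneg (mul_nonneg (ecut_nonneg' _ _ _) (gvol_nonneg' _ _))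
    (mul_nonneg (gvol_nonneg' _ _) (gvol_nonneg' _ _))

lemma hhat_le' (H : SimpleGraph V) {A : Finset V} (h1 : A.Nonempty) (h2 : A ≠ univ) :
    hhat H * (gvol H A * gvol H Aᶜ) ≤ ecut H A Aᶜ * gvol H univ := by
  have hbdd : BddBelow { x | ∃ A : Finset V, A.Nonempty ∧ A ≠ univ ∧
      x = ecut H A Aᶜ * gvol H univ / (gvol H A * gvol H Aᶜ) } := by
    refine ⟨0, ?_⟩
    rintro x ⟨B, -, -, rfl⟩
    exact div_nonneg (mul_nonneg (ecut_nonneg' _ _ _) (gvol_nonneg' _ _))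
      (mul_nonneg (gvol_nonneg' _ _) (gvol_nonneg' _ _))
  have hle := csInf_le hbdd ⟨A, h1, h2, rfl⟩
  rcases eq_or_lt_of_le (mul_nonneg (gvol_nonneg' H A) (gvol_nonneg' H Aᶜ)) with h | h
  · rw [← h, mul_zero]
    exact mul_nonneg (ecut_nonneg' _ _ _) (gvol_nonneg' _ _)
  · calc hhat H * (gvol H A * gvol H Aᶜ)
        ≤ ecut H A Aᶜ * gvol H univ / (gvol H A * gvol H Aᶜ) * (gvol H A * gvol H Aᶜ) :=
          mul_le_mul_of_nonneg_right hle h.le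
      _ = ecut H A Aᶜ * gvol H univ := div_mul_cancel₀ _ h.ne'

end Aux

/-- If `H ≤ G` with `e(H) ≥ α e(G)` and `0 < α ≤ 1`, then
`q*(G) ≤ 1 - α min{ĥ_H, α}`. -/
theorem stmt4 {V : Type*} [Fintype V] (G H : SimpleGraph V) (hle : H ≤ G)
    (hG : G.edgeFinset.Nonempty) (α : ℝ) (hα0 : 0 < α) (hα1 : α ≤ 1)
    (hsize : α * edgecount G ≤ edgecount H) :
    modularity G ≤ 1 - α * min (hhat H) α := by
  set c := min (hhat H) α with hc
  have hh0 : 0 ≤ hhat H := hhat_nonneg' H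
  have hc0 : 0 ≤ c := le_min hh0 hα0.le
  have hcα : c ≤ α := min_le_right _ _
  have hch : c ≤ hhat H := min_le_left _ _
  have hm : 0 < edgecount G := by
    unfold edgecount
    exact_mod_cast Finset.card_pos.2 hG
  set m := edgecount G with hmdef
  have heH : 0 < edgecount H := lt_of_lt_of_le (by positivity) hsize
  set vH := gvol H univ with hvHdef
  have hvHeq : vH = 2 * edgecount H := gvol_univ' H
  have hvH : 0 < vH := by rw [hvHeq]; linarith
  have hvHα : 2 * α * m ≤ vH := by rw [hvHeq]; linarith
  have hrhs : (0:ℝ) ≤ 1 - α * c := by nlinarith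
  apply Real.sSup_le _ hrhs
  rintro x ⟨P, rfl⟩
  -- sums over parts
  have hsums : ∀ f : V → ℝ, ∑ A ∈ P.parts, ∑ v ∈ A, f v = ∑ v ∈ univ, f v := by
    intro f
    have := (Finset.sum_biUnion (f := f) (t := id) P.supIndep.pairwiseDisjoint).symm
    simp only [id] at this
    rw [this, P.biUnion_parts]
  have hsumG : ∑ A ∈ P.parts, gvol G A = gvol G univ := hsums _
  have hsumH : ∑ A ∈ P.parts, gvol H A = vH := by
    rw [hvHdef]; exact hsums _
  have hsumx : ∑ A ∈ P.parts, gvol H A / vH = 1 := by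
    rw [← Finset.sum_div, hsumH, div_self hvH.ne']
  set s := ∑ A ∈ P.parts, (gvol H A / vH) ^ 2 with hs
  have hs0 : 0 ≤ s := Finset.sum_nonneg fun A _ => sq_nonneg _
  have hs1 : s ≤ 1 := by
    rw [← hsumx]
    refine Finset.sum_le_sum fun A hA => ?_
    have hx0 : 0 ≤ gvol H A / vH := div_nonneg (gvol_nonneg' _ _) hvH.le
    have hx1 : gvol H A / vH ≤ 1 := by
      rw [div_le_one hvH]
      have hcompl : gvol H A + gvol H Aᶜ = vH := by
        rw [hvHdef]; unfold gvol
        exact Finset.sum_add_sum_compl A _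
      have := gvol_nonneg' H Aᶜ
      linarith
    nlinarith
  -- per-part inequality
  have hpart : ∀ A ∈ P.parts,
      α * hhat H * (gvol H A / vH - (gvol H A / vH) ^ 2) + α ^ 2 * (gvol H A / vH) ^ 2
        ≤ ecut G A Aᶜ / (2 * m) + (gvol G A / (2 * m)) ^ 2 := by
    intro A hA
    have hAne : A.Nonempty := P.nonempty_of_mem_parts hA
    set a := gvol H A with ha
    set b := gvol H Aᶜ with hb
    have ha0 : 0 ≤ a := gvol_nonneg' _ _
    have hb0 : 0 ≤ b := gvol_nonneg' _ _
    have hab : a + b = vH := by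
      rw [ha, hb, hvHdef]; unfold gvol
      exact Finset.sum_add_sum_compl A _
    have hb' : b = vH - a := by linarith
    have hbx : a / vH - (a / vH) ^ 2 = (a / vH) * (b / vH) := by
      rw [hb']; field_simp
    rw [hbx]
    have hgA : a ≤ gvol G A := gvol_mono' hle A
    have he0 : 0 ≤ ecut G A Aᶜ := ecut_nonneg' _ _ _
    -- piece (ii) : α² x² ≤ y²
    have hii : α ^ 2 * (a / vH) ^ 2 ≤ (gvol G A / (2 * m)) ^ 2 := by
      have hinner : α * (a / vH) ≤ gvol G A / (2 * m) := by
        rw [mul_div_assoc' α a vH, div_le_div_iff₀ hvH (by linarith)]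
        calc α * a * (2 * m) = a * (2 * α * m) := by ring
          _ ≤ a * vH := mul_le_mul_of_nonneg_left hvHα ha0
          _ ≤ gvol G A * vH := mul_le_mul_of_nonneg_right hgA hvH.le
      have hinner0 : 0 ≤ α * (a / vH) := by positivity
      calc α ^ 2 * (a / vH) ^ 2 = (α * (a / vH)) ^ 2 := by ring
        _ ≤ (gvol G A / (2 * m)) ^ 2 := by
            apply pow_le_pow_left₀ hinner0 hinner
    -- piece (i)
    have hi : α * hhat H * ((a / vH) * (b / vH)) ≤ ecut G A Aᶜ / (2 * m) := by
      by_cases hAu : A = univ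
      · have hbz : b = 0 := by
          rw [hb, hAu, compl_univ]
          simp [gvol]
        rw [hbz]
        simp only [zero_div, mul_zero]
        positivity
      · have hkey : hhat H * (a * b) ≤ ecut H A Aᶜ * vH := hhat_le' H hAne hAu
        have hkey2 : hhat H * (a * b) ≤ ecut G A Aᶜ * vH :=
          le_trans hkey (mul_le_mul_of_nonneg_right (ecut_mono' hle A Aᶜ) hvH.le)
        have heq : α * hhat H * ((a / vH) * (b / vH)) = α * (hhat H * (a * b)) / (vH * vH) := by
          field_simp
        rw [heq, div_le_div_iff₀ (by positivity) (by linarith)]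
        calc α * (hhat H * (a * b)) * (2 * m) = hhat H * (a * b) * (2 * α * m) := by ring
          _ ≤ ecut G A Aᶜ * vH * (2 * α * m) := mul_le_mul_of_nonneg_right hkey2 (by positivity)
          _ ≤ ecut G A Aᶜ * vH * vH := mul_le_mul_of_nonneg_left hvHα (by positivity)
          _ = ecut G A Aᶜ * (vH * vH) := by ring
    linarith
  -- sum the per-part inequalities
  set E := ∑ A ∈ P.parts, ecut G A Aᶜ with hE
  set S := ∑ A ∈ P.parts, (gvol G A / (2 * m)) ^ 2 with hS
  have hsumineq : α * hhat H * (1 - s) + α ^ 2 * s ≤ E / (2 * m) + S := by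
    have h1 := Finset.sum_le_sum hpart
    have hL : ∑ A ∈ P.parts,
        (α * hhat H * (gvol H A / vH - (gvol H A / vH) ^ 2) + α ^ 2 * (gvol H A / vH) ^ 2)
        = α * hhat H * (1 - s) + α ^ 2 * s := by
      rw [Finset.sum_add_distrib, ← Finset.mul_sum, ← Finset.mul_sum,
        Finset.sum_sub_distrib, hsumx]
    have hR : ∑ A ∈ P.parts,
        (ecut G A Aᶜ / (2 * m) + (gvol G A / (2 * m)) ^ 2) = E / (2 * m) + S := by
      rw [Finset.sum_add_distrib, ← Finset.sum_div]
    rw [hL, hR] at h1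
    exact h1
  -- rewrite the modularity score
  have hvG : gvol G univ = 2 * m := gvol_univ' G
  have heinsum : ∑ A ∈ P.parts, ein G A = (2 * m - E) / 2 := by
    have : ∀ A ∈ P.parts, ein G A = (gvol G A - ecut G A Aᶜ) / 2 := by
      intro A _
      rw [ein, gvol_eq_split']; ring
    rw [Finset.sum_congr rfl this, ← Finset.sum_div, Finset.sum_sub_distrib, hsumG, hvG]
  have hsqsum : ∑ A ∈ P.parts, (gvol G A) ^ 2 = 4 * m ^ 2 * S := by
    rw [hS, Finset.mul_sum]
    refine Finset.sum_congr rfl fun A _ => ?_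
    field_simp
    ring
  have hmod : modScore G P = 1 - (E / (2 * m) + S) := by
    unfold modScore
    rw [heinsum, hsqsum, ← hmdef]
    field_simp
    ring
  rw [hmod]
  have hfinal : α * c ≤ α * hhat H * (1 - s) + α ^ 2 * s := by
    nlinarith [mul_le_mul_of_nonneg_left hch (mul_nonneg hα0.le (by linarith : (0:ℝ) ≤ 1 - s)),
      mul_le_mul_of_nonneg_left hcα (mul_nonneg hα0.le hs0)]
  linarith

end
end

section
/- For 0 < α ≤ 1 define f(α) = α²⌊1/α⌋ + (1 − α⌊1/α⌋)². Then for any finite sequence of nonnegative reals x_i with ∑ x_i = 1 and x_i ≤ α for all i, we have ∑ x_i² ≤ f(α); moreover f is continuous and increasing on (0,1], and α − α²/4 ≤ f(α) ≤ α. -/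
set_option maxHeartbeats 800000


open Finset
open scoped Classical

noncomputable section

variable {V : Type*} [Fintype V]

/-- The function `f(x) = x²⌊1/x⌋ + (1 - x⌊1/x⌋)²`. -/
noncomputable def ffun (x : ℝ) : ℝ :=
  x ^ 2 * (⌊1 / x⌋ : ℝ) + (1 - x * (⌊1 / x⌋ : ℝ)) ^ 2

lemma sumsq_le_ffun (α : ℝ) (hα0 : 0 < α) (hα1 : α ≤ 1) (n : ℕ) (x : Fin n → ℝ)
    (h0 : ∀ i, 0 ≤ x i) (h1 : ∀ i, x i ≤ α) (hs : ∑ i, x i = 1) :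
    ∑ i, (x i) ^ 2 ≤ ffun α := by
  set k : ℤ := ⌊1 / α⌋ with hk
  have hk1 : (1 : ℤ) ≤ k := Int.le_floor.mpr (by
    rw [Int.cast_one]; exact one_le_one_div hα0 hα1)
  have hfl : (k : ℝ) ≤ 1 / α := Int.floor_le _
  have hfl' : 1 / α < (k : ℝ) + 1 := Int.lt_floor_add_one _
  have hkα : (k : ℝ) * α ≤ 1 := by
    calc (k : ℝ) * α ≤ (1 / α) * α := by nlinarith
    _ = 1 := by field_simp
  have hkα' : 1 < ((k : ℝ) + 1) * α := by
    have := (div_lt_iff₀ hα0).mp hfl'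
    linarith
  set r : ℝ := 1 - (k : ℝ) * α with hr
  have hr0 : 0 ≤ r := by linarith
  have hrα : r < α := by simp only [hr]; nlinarith
  have hffun : ffun α = α ^ 2 * (k : ℝ) + r ^ 2 := by
    simp only [ffun, hr, ← hk]; ring
  rw [hffun]
  -- key: ∑ x i * (α - x i) ≥ r * (α - r)
  set B := Finset.univ.filter (fun i => r < x i) with hB
  set m := B.card with hm
  set T := ∑ i ∈ B, x i with hT
  have hTm : T ≤ (m : ℝ) * α := by
    have := Finset.sum_le_card_nsmul B x α (fun i _ => h1 i)
    simpa [hT, hm, nsmul_eq_mul] using this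
  have hT1 : T ≤ 1 := by
    rw [← hs]
    exact Finset.sum_le_sum_of_subset_of_nonneg (Finset.subset_univ B)
      (fun i _ _ => h0 i)
  have hsplit : ∑ i ∈ Bᶜ, x i = 1 - T := by
    have := Finset.sum_add_sum_compl B x
    rw [hs] at this; linarith [this]
  have hkey : r * (α - r) ≤ ∑ i, x i * (α - x i) := by
    have h2 : ∑ i, x i * (α - x i)
        = ∑ i ∈ B, x i * (α - x i) + ∑ i ∈ Bᶜ, x i * (α - x i) :=
      (Finset.sum_add_sum_compl B _).symm
    have hBi : ∀ i ∈ B, r * (α - x i) ≤ x i * (α - x i) := by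
      intro i hi
      have hri : r < x i := by simpa [hB] using hi
      have : x i ≤ α := h1 i
      nlinarith
    have hSi : ∀ i ∈ Bᶜ, x i * (α - r) ≤ x i * (α - x i) := by
      intro i hi
      have hri : x i ≤ r := by
        simp only [hB, Finset.mem_compl, Finset.mem_filter, Finset.mem_univ,
          true_and, not_lt] at hi
        exact hi
      have := h0 i
      nlinarith
    have hB1 : r * ((m : ℝ) * α - T) ≤ ∑ i ∈ B, x i * (α - x i) := by
      calc r * ((m : ℝ) * α - T) = ∑ i ∈ B, r * (α - x i) := by
            rw [← Finset.mul_sum, Finset.sum_sub_distrib, Finset.sum_const,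
              nsmul_eq_mul, hT]
        _ ≤ _ := Finset.sum_le_sum hBi
    have hS1 : (1 - T) * (α - r) ≤ ∑ i ∈ Bᶜ, x i * (α - x i) := by
      calc (1 - T) * (α - r) = ∑ i ∈ Bᶜ, x i * (α - r) := by
            rw [← Finset.sum_mul, hsplit]
        _ ≤ _ := Finset.sum_le_sum hSi
    rcases le_or_gt (m : ℤ) k with hc | hc
    · have hmk : (m : ℝ) * α ≤ (k : ℝ) * α := by
        have : (m : ℝ) ≤ (k : ℝ) := by exact_mod_cast hc
        nlinarith
      nlinarith
    · have hmk : ((k : ℝ) + 1) * α ≤ (m : ℝ) * α := by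
        have : (k : ℝ) + 1 ≤ (m : ℝ) := by exact_mod_cast hc
        nlinarith
      nlinarith
  have hexp : ∑ i, (x i) ^ 2 = α - ∑ i, x i * (α - x i) := by
    have : ∑ i, x i * (α - x i) = α * (∑ i, x i) - ∑ i, (x i) ^ 2 := by
      rw [Finset.mul_sum, ← Finset.sum_sub_distrib]
      congr 1; ext i; ring
    rw [this, hs]; ring
  rw [hexp]
  nlinarith

lemma ffun_rep (x : ℝ) (hx : x ≠ 0) :
    ffun x = x - x ^ 2 * (Int.fract (1 / x) * (1 - Int.fract (1 / x))) := by
  rw [ffun, Int.fract]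
  field_simp
  ring

lemma ffun_cont : ContinuousOn ffun (Set.Ioc 0 1) := by
  have hφ : Continuous fun t : ℝ => Int.fract t * (1 - Int.fract t) := by
    have h : ContinuousOn (fun t : ℝ => t * (1 - t)) (Set.Icc 0 1) :=
      (continuous_id.mul (continuous_const.sub continuous_id)).continuousOn
    have := ContinuousOn.comp_fract'' h (by norm_num)
    exact this
  have hg : ContinuousOn (fun x : ℝ => x - x ^ 2 *
      (Int.fract (1 / x) * (1 - Int.fract (1 / x)))) (Set.Ioc 0 1) := by
    apply ContinuousOn.sub continuousOn_id
    apply ContinuousOn.mul (by fun_prop)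
    exact hφ.comp_continuousOn (continuousOn_const.div continuousOn_id
      (fun x hx => ne_of_gt hx.1))
  exact hg.congr fun x hx => ffun_rep x (ne_of_gt hx.1)

lemma ffun_bounds (α : ℝ) (hα0 : 0 < α) :
    α - α ^ 2 / 4 ≤ ffun α ∧ ffun α ≤ α := by
  rw [ffun_rep α (ne_of_gt hα0)]
  set u := Int.fract (1 / α) with hu
  have h0 : 0 ≤ u := Int.fract_nonneg _
  have h1 : u < 1 := Int.fract_lt_one _
  constructor
  · nlinarith [mul_nonneg (sq_nonneg α) (sq_nonneg (u - 1/2))]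
  · nlinarith [mul_nonneg (sq_nonneg α) (mul_nonneg h0 (by linarith : (0:ℝ) ≤ 1 - u))]

lemma ffun_mono : MonotoneOn ffun (Set.Ioc 0 1) := by
  intro a ha b hb hab
  obtain ⟨ha0, ha1⟩ := ha
  obtain ⟨hb0, hb1⟩ := hb
  set k : ℤ := ⌊1 / a⌋ with hk
  have hk1 : (1 : ℤ) ≤ k := Int.le_floor.mpr (by
    rw [Int.cast_one]; exact one_le_one_div ha0 ha1)
  have hfl : (k : ℝ) ≤ 1 / a := Int.floor_le _
  have hfl' : 1 / a < (k : ℝ) + 1 := Int.lt_floor_add_one _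
  have hka : (k : ℝ) * a ≤ 1 := by
    calc (k : ℝ) * a ≤ (1 / a) * a := by nlinarith
    _ = 1 := by field_simp
  have hka' : 1 < ((k : ℝ) + 1) * a := by
    have := (div_lt_iff₀ ha0).mp hfl'
    linarith
  set r : ℝ := 1 - (k : ℝ) * a with hr
  have hr0 : 0 ≤ r := by linarith
  have hra : r < a := by simp only [hr]; nlinarith
  set K : ℕ := k.toNat with hK
  have hKk : (K : ℝ) = (k : ℝ) := by
    rw [hK]; exact_mod_cast congrArg (Int.cast : ℤ → ℝ) (Int.toNat_of_nonneg (by linarith))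
  set x : Fin (K + 1) → ℝ := fun i => if i = Fin.last K then r else a with hx
  have hxsum : ∑ i, x i = 1 := by
    rw [Fin.sum_univ_castSucc]
    have h1 : ∀ i : Fin K, x i.castSucc = a := by
      intro i; simp [hx, (Fin.castSucc_lt_last i).ne]
    have h2 : x (Fin.last K) = r := by simp [hx]
    rw [h2, Finset.sum_congr rfl (fun i _ => h1 i), Finset.sum_const]
    simp [nsmul_eq_mul, hKk]
    linarith
  have hxsq : ∑ i, (x i) ^ 2 = ffun a := by
    rw [Fin.sum_univ_castSucc]
    have h1 : ∀ i : Fin K, (x i.castSucc) ^ 2 = a ^ 2 := by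
      intro i; simp [hx, (Fin.castSucc_lt_last i).ne]
    have h2 : (x (Fin.last K)) ^ 2 = r ^ 2 := by simp [hx]
    rw [h2, Finset.sum_congr rfl (fun i _ => h1 i), Finset.sum_const]
    simp only [Finset.card_univ, Fintype.card_fin, nsmul_eq_mul, hKk]
    rw [ffun, ← hk, hr]
    ring
  rw [← hxsq]
  exact sumsq_le_ffun b hb0 hb1 (K + 1) x
    (fun i => by simp only [hx]; split <;> linarith)
    (fun i => by simp only [hx]; split <;> linarith)
    hxsum

/-- `f(α)` bounds `∑ xᵢ²` when `0 ≤ xᵢ ≤ α` and `∑ xᵢ = 1`; moreover `f` is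
continuous and increasing on `(0,1]`, and `α - α²/4 ≤ f(α) ≤ α`. -/
theorem stmt9 (α : ℝ) (hα0 : 0 < α) (hα1 : α ≤ 1) :
    (∀ (n : ℕ) (x : Fin n → ℝ), (∀ i, 0 ≤ x i) → (∀ i, x i ≤ α) → (∑ i, x i = 1) →
      ∑ i, (x i) ^ 2 ≤ ffun α) ∧
    ContinuousOn ffun (Set.Ioc 0 1) ∧
    MonotoneOn ffun (Set.Ioc 0 1) ∧
    α - α ^ 2 / 4 ≤ ffun α ∧ ffun α ≤ α := by
  exact ⟨fun n x h0 h1 hs => sumsq_le_ffun α hα0 hα1 n x h0 h1 hs, ffun_cont, ffun_mono,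
    (ffun_bounds α hα0).1, (ffun_bounds α hα0).2⟩
end
end

section
/- Let H be a connected graph and U* a nonempty proper vertex subset achieving ĥ_H = ĥ_H(U*). Then both induced subgraphs H[U*] and H[V(H)∖U*] are connected. -/
/-! If `H[U]` splits as `A ⊔ B` with no edges between the parts, let `a`, `b` count the edges
from `A`, `B` to `Uᶜ` and let `α`, `β`, `γ` be the volumes of `A`, `B`, `Uᶜ`. Up to the common
factor `vol H`, `ĥ(U) = (a + b) / ((α + β) γ)`, `ĥ(A) = a / (α (β + γ))` and
`ĥ(B) = b / (β (α + γ))`. The last two denominators add up to `(α + β) γ + 2 α β`, so one of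
`ĥ(A)`, `ĥ(B)` lies strictly below `ĥ(U)`, contradicting minimality. The complement follows
from the symmetry `ĥ(Uᶜ) = ĥ(U)`. -/

open Finset
open scoped Classical

noncomputable section

variable {V : Type*} [Fintype V]

/-- `ĥ_G(A)`, the quantity minimised in `hhat`. -/
def hhatAt (G : SimpleGraph V) (A : Finset V) : ℝ :=
  ecut G A Aᶜ * gvol G univ / (gvol G A * gvol G Aᶜ)

lemma Disjoint.compl_eq_sup_compl_sup {α : Type*} [BooleanAlgebra α] {a b : α}
    (h : Disjoint a b) : aᶜ = b ⊔ (a ⊔ b)ᶜ := by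
  rw [compl_sup, sup_inf_left, sup_compl_eq_top, inf_top_eq]
  exact (sup_eq_right.mpr h.symm.le_compl_right).symm

lemma mul_div_lt_or_mul_div_lt {a b α β γ t : ℝ} (hab : 0 < a + b) (hα : 0 < α) (hβ : 0 < β)
    (hγ : 0 < γ) (ht : 0 < t) :
    a * t / (α * (β + γ)) < (a + b) * t / ((α + β) * γ) ∨
      b * t / (β * (α + γ)) < (a + b) * t / ((α + β) * γ) := by
  by_contra! h
  obtain ⟨h₁, h₂⟩ := h
  rw [div_le_div_iff₀ (by positivity) (by positivity)] at h₁ h₂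
  -- Adding `h₁` and `h₂` gives `(a + b) t (α (β + γ) + β (α + γ)) ≤ (a + b) t (α + β) γ`,
  -- but the left-hand bracket exceeds the right-hand one by `2 α β`.
  nlinarith [mul_pos (mul_pos hab ht) (mul_pos hα hβ)]

namespace SimpleGraph

variable (G : SimpleGraph V)

section
omit [Fintype V]

lemma ecut_nonneg (A B : Finset V) : 0 ≤ ecut G A B :=
  Nat.cast_nonneg _

lemma ecut_comm (A B : Finset V) : ecut G A B = ecut G B A := by
  unfold ecut
  congr 1
  apply card_bij' (fun p _ => p.swap) (fun p _ => p.swap) <;>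
    simp +contextual [adj_comm]

lemma ecut_union_left {A B : Finset V} (C : Finset V) (h : Disjoint A B) :
    ecut G (A ∪ B) C = ecut G A C + ecut G B C := by
  unfold ecut
  rw [union_product, filter_union, card_union_of_disjoint, Nat.cast_add]
  exact disjoint_filter_filter (disjoint_product.mpr (Or.inl h))

lemma ecut_union_right (A : Finset V) {B C : Finset V} (h : Disjoint B C) :
    ecut G A (B ∪ C) = ecut G A B + ecut G A C := by
  rw [ecut_comm, ecut_union_left G A h, ecut_comm G B, ecut_comm G C]

variable {G}

lemma ecut_eq_zero {A B : Finset V} (h : ∀ a ∈ A, ∀ b ∈ B, ¬ G.Adj a b) : ecut G A B = 0 := by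
  unfold ecut
  rw [filter_false_of_mem fun p hp => h p.1 (mem_product.mp hp).1 p.2 (mem_product.mp hp).2]
  simp

lemma exists_split_of_not_induce_connected {U : Finset V} (hU : U.Nonempty)
    (hnc : ¬ (G.induce (U : Set V)).Connected) :
    ∃ A ⊆ U, A.Nonempty ∧ A ≠ U ∧ ecut G A (U \ A) = 0 := by
  have : Nonempty (U : Set V) := hU.coe_sort
  obtain ⟨x, y, hxy⟩ : ∃ x y, ¬ (G.induce (U : Set V)).Reachable x y := by
    simpa [connected_iff, Preconnected] using hnc
  let A := U.filter fun u => ∃ h : u ∈ U, (G.induce (U : Set V)).Reachable x ⟨u, h⟩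
  have hxA : x.1 ∈ A := mem_filter.mpr ⟨x.2, x.2, Reachable.refl _⟩
  have hyA : y.1 ∉ A := fun hy => hxy (mem_filter.mp hy).2.2
  refine ⟨A, filter_subset _ _, ⟨_, hxA⟩, (ne_of_mem_of_not_mem' (mem_coe.mp y.2) hyA).symm,
    ecut_eq_zero ?_⟩
  intro a ha b hb hab
  obtain ⟨hbU, hbA⟩ := mem_sdiff.mp hb
  obtain ⟨-, haU, hxa⟩ := mem_filter.mp ha
  exact hbA (mem_filter.mpr ⟨hbU, hbU, hxa.trans (Adj.reachable (G := G.induce _)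
    (u := ⟨a, haU⟩) (v := ⟨b, hbU⟩) hab)⟩)

end

lemma gvol_nonneg (A : Finset V) : 0 ≤ gvol G A :=
  sum_nonneg fun _ _ => Nat.cast_nonneg _

lemma gvol_union {A B : Finset V} (h : Disjoint A B) :
    gvol G (A ∪ B) = gvol G A + gvol G B :=
  sum_union h

lemma hhatAt_compl (A : Finset V) : hhatAt G Aᶜ = hhatAt G A := by
  rw [hhatAt, hhatAt, compl_compl, ecut_comm, mul_comm (gvol G Aᶜ)]

lemma hhat_le_hhatAt {A : Finset V} (hA : A.Nonempty) (hAu : A ≠ univ) :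
    hhat G ≤ hhatAt G A := by
  refine csInf_le ⟨0, ?_⟩ ⟨A, hA, hAu, rfl⟩
  rintro _ ⟨B, -, -, rfl⟩
  exact div_nonneg (mul_nonneg (ecut_nonneg G _ _) (gvol_nonneg G _))
    (mul_nonneg (gvol_nonneg G _) (gvol_nonneg G _))

variable {G}

lemma Connected.gvol_pos [Nontrivial V] (hc : G.Connected) {A : Finset V} (hA : A.Nonempty) :
    0 < gvol G A := by
  obtain ⟨v, hv⟩ := hA
  have hdeg : (0 : ℝ) < G.degree v := by exact_mod_cast hc.preconnected.degree_pos_of_nontrivial v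
  exact hdeg.trans_le (single_le_sum (f := fun v => (G.degree v : ℝ))
    (fun _ _ => Nat.cast_nonneg _) hv)

lemma Connected.ecut_compl_pos (hc : G.Connected) {A : Finset V} (hA : A.Nonempty)
    (hAu : A ≠ univ) : 0 < ecut G A Aᶜ := by
  obtain ⟨u, hu⟩ := hA
  obtain ⟨w, hw⟩ := (compl_ne_univ_iff_nonempty Aᶜ).mp (by rwa [compl_compl])
  obtain ⟨p⟩ := hc.preconnected u w
  obtain ⟨d, -, hd₁, hd₂⟩ := p.exists_boundary_dart (A : Set V) (by simpa) (by simpa using hw)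
  unfold ecut
  exact_mod_cast card_pos.mpr
    ⟨(d.fst, d.snd), mem_filter.mpr ⟨mem_product.mpr ⟨hd₁, mem_compl.mpr hd₂⟩, d.adj⟩⟩

lemma Connected.hhatAt_lt_or_hhatAt_lt (hc : G.Connected) {A B : Finset V} (hAB : Disjoint A B)
    (hcut : ecut G A B = 0) (hA : A.Nonempty) (hB : B.Nonempty) (hABu : A ∪ B ≠ univ) :
    hhatAt G A < hhatAt G (A ∪ B) ∨ hhatAt G B < hhatAt G (A ∪ B) := by
  have hcutU := hc.ecut_compl_pos (hA.mono subset_union_left) hABu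
  unfold hhatAt
  set C := (A ∪ B)ᶜ with hC_def
  have hC : C.Nonempty := (compl_ne_univ_iff_nonempty C).mp (by rwa [hC_def, compl_compl])
  have hAC : Disjoint A C := disjoint_compl_right.mono_left subset_union_left
  have hBC : Disjoint B C := disjoint_compl_right.mono_left subset_union_right
  have : Nontrivial V := by
    obtain ⟨a, ha⟩ := hA
    obtain ⟨c, hcC⟩ := hC
    exact nontrivial_of_ne a c fun h => Finset.disjoint_left.mp hAC ha (h ▸ hcC)
  have hAc : Aᶜ = B ∪ C := hAB.compl_eq_sup_compl_sup
  have hBc : Bᶜ = A ∪ C := by rw [hC_def, union_comm A B]; exact hAB.symm.compl_eq_sup_compl_sup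
  rw [hAc, hBc, ecut_union_right G A hBC, ecut_union_right G B hAC, hcut, ecut_comm G B, hcut,
    zero_add, zero_add, gvol_union G hAB, gvol_union G hAC, gvol_union G hBC]
  rw [ecut_union_left G C hAB] at hcutU ⊢
  exact mul_div_lt_or_mul_div_lt hcutU (hc.gvol_pos hA) (hc.gvol_pos hB) (hc.gvol_pos hC)
    (hc.gvol_pos univ_nonempty)

lemma Connected.induce_connected_of_hhatAt_eq_hhat (hc : G.Connected) {U : Finset V}
    (hU : U.Nonempty) (hUu : U ≠ univ) (hmin : hhatAt G U = hhat G) :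
    (G.induce (U : Set V)).Connected := by
  by_contra hnc
  obtain ⟨A, hAU, hA, hAU', hcut⟩ := exists_split_of_not_induce_connected hU hnc
  have hB : (U \ A).Nonempty := sdiff_nonempty.mpr fun h => hAU' (hAU.antisymm h)
  have hsplit := hc.hhatAt_lt_or_hhatAt_lt disjoint_sdiff hcut hA hB
    (by rwa [union_sdiff_of_subset hAU])
  rw [union_sdiff_of_subset hAU, hmin] at hsplit
  rcases hsplit with h | h
  · exact (hhat_le_hhatAt G hA (ne_top_of_le_ne_top hUu hAU)).not_gt h
  · exact (hhat_le_hhatAt G hB (ne_top_of_le_ne_top hUu sdiff_subset)).not_gt h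

end SimpleGraph

/-- If `H` is connected and the nonempty proper set `U*` attains `ĥ_H`, then
both `H[U*]` and `H[V∖U*]` are connected. -/
theorem stmt17 {V : Type*} [Fintype V] (H : SimpleGraph V) (hc : H.Connected)
    (U : Finset V) (hUne : U.Nonempty) (hUp : U ≠ univ)
    (hmin : ecut H U Uᶜ * gvol H univ / (gvol H U * gvol H Uᶜ) = hhat H) :
    (H.induce (U : Set V)).Connected ∧ (H.induce ((Uᶜ : Finset V) : Set V)).Connected := by
  have hUc : Uᶜ.Nonempty := (compl_ne_univ_iff_nonempty Uᶜ).mp (by rwa [compl_compl])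
  have hUcu : Uᶜ ≠ univ := (compl_ne_univ_iff_nonempty U).mpr hUne
  exact ⟨hc.induce_connected_of_hhatAt_eq_hhat hUne hUp hmin,
    hc.induce_connected_of_hhatAt_eq_hhat hUc hUcu ((H.hhatAt_compl U).trans hmin)⟩
end
end
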